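/- arXiv:1605.06254 — 2 statements merged into one kernel-verified Lean document; each statement's English description precedes it below -/
import Mathlib

section
/- Let p : ℝ → ℝ be a 2π-periodic function of class C² satisfying ∫₀^{2π} p(φ)cos φ dφ = 0 and ∫₀^{2π} p(φ)sin φ dφ = 0, and suppose there is a constant w such that p(φ) + p(φ + π) = w for all φ. Let a₀ = (1/(2π))∫₀^{2π} p dφ, F = ½∫₀^{2π}(p² − p'²) dφ, A = ½∫₀^{2π} p² dφ and δ₂² = ∫₀^{2π}(p(φ) − a₀)² dφ. Then (32/9)π(A − F) ≥ 16π δ₂²; equivalently, ∫₀^{2π} p'(φ)² dφ ≥ 9∫₀^{2π}(p(φ) − a₀)² dφ. -/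
/-
With `g = p - w / 2` the width condition says `g (φ + π) = -g φ`. Integrating over a period
shows that `g` has mean zero, so `a₀ = w / 2`; the same antiperiodicity kills every even
Fourier coefficient of `g`, and the Steiner point condition kills the coefficients `±1`. All
surviving modes have `|n| ≥ 3`, and since the coefficients of `g'` are `i n ĝ(n)`, Parseval for
`g` and `g'` gives `∫ g'² ≥ 9 ∫ g²`. Finally `A - F = ½ ∫ p'²`.
-/

open Real MeasureTheory Complex Set Function
open scoped Interval

theorem Continuous.memLp_restrict_Ioc {E : Type*} [NormedAddCommGroup E] {f : ℝ → E}
    (hf : Continuous f) (q : ENNReal) (a b : ℝ) : MemLp f q (volume.restrict (Ioc a b)) := by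
  obtain ⟨C, hC⟩ :=
    (isCompact_Icc (a := a) (b := b)).exists_bound_of_continuousOn hf.continuousOn
  exact MemLp.of_bound hf.aestronglyMeasurable C <|
    (ae_restrict_iff' measurableSet_Ioc).2 (ae_of_all _ fun x hx => hC x (Ioc_subset_Icc_self hx))

theorem Function.Antiperiodic.intervalIntegral_add_two_mul_eq_zero {E : Type*}
    [NormedAddCommGroup E] [NormedSpace ℝ E] {f : ℝ → E} {c : ℝ} (hf : Antiperiodic f c)
    (hfc : Continuous f) (a : ℝ) : ∫ x in a..a + 2 * c, f x = 0 := by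
  have hshift : ∫ x in a + c..a + 2 * c, f x = -∫ x in a..a + c, f x := by
    calc ∫ x in a + c..a + 2 * c, f x = ∫ x in a..a + c, f (x + c) := by
          rw [intervalIntegral.integral_comp_add_right]; ring_nf
      _ = -∫ x in a..a + c, f x := by simp only [hf _, intervalIntegral.integral_neg]
  rw [← intervalIntegral.integral_add_adjacent_intervals (hfc.intervalIntegrable a (a + c))
    (hfc.intervalIntegrable _ _), hshift, add_neg_cancel]

theorem intervalIntegral_sub_const_mul {f g : ℝ → ℝ} (hf : Continuous f) (hg : Continuous g)
    {a b : ℝ} (hg0 : ∫ x in a..b, g x = 0) (c : ℝ) :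
    ∫ x in a..b, (f x - c) * g x = ∫ x in a..b, f x * g x := by
  simp_rw [sub_mul]
  rw [intervalIntegral.integral_sub (f := fun x => f x * g x) (g := fun x => c * g x)
    ((hf.mul hg).intervalIntegrable a b) ((continuous_const.mul hg).intervalIntegrable a b),
    intervalIntegral.integral_const_mul, hg0, mul_zero, sub_zero]

theorem fourierCoeffOn_eq_zero_of_antiperiodic {a b : ℝ} (hab : a < b) {f : ℝ → ℂ}
    (hf : Antiperiodic f ((b - a) / 2)) (hfc : Continuous f) {n : ℤ} (hn : Even n) :
    fourierCoeffOn hab f n = 0 := by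
  obtain ⟨m, rfl⟩ := hn
  -- for even `n`, the character `fourier (-n)` is invariant under the half-period shift
  have hanti : Antiperiodic (fun x : ℝ => fourier (-(m + m)) (x : AddCircle (b - a)) • f x)
      ((b - a) / 2) := by
    intro x
    have hT : (b : ℂ) - a ≠ 0 := by exact_mod_cast (sub_pos.2 hab).ne'
    have hexp : 2 * π * I * ↑(-(m + m)) * ↑(x + (b - a) / 2) / ↑(b - a)
        = 2 * π * I * ↑(-(m + m)) * ↑x / ↑(b - a) + (-m : ℤ) * (2 * π * I) := by
      push_cast
      field_simp
      ring
    simp only [fourier_coe_apply, hf x, hexp, Complex.exp_add, exp_int_mul_two_pi_mul_I,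
      mul_one, smul_neg]
  have hcont : Continuous fun x : ℝ => fourier (-(m + m)) (x : AddCircle (b - a)) • f x := by
    fun_prop
  have hzero := hanti.intervalIntegral_add_two_mul_eq_zero hcont a
  rw [show a + 2 * ((b - a) / 2) = b by ring] at hzero
  rw [fourierCoeffOn_eq_integral, hzero, smul_zero]

theorem fourierCoeffOn_deriv_of_eq {a b : ℝ} (hab : a < b) {f f' : ℝ → ℂ}
    (hf : ∀ x ∈ [[a, b]], HasDerivAt f (f' x) x) (hf' : IntervalIntegrable f' volume a b)
    (hfab : f b = f a) (n : ℤ) :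
    fourierCoeffOn hab f' n = 2 * π * I * n / (b - a) * fourierCoeffOn hab f n := by
  rcases eq_or_ne n 0 with rfl | hn
  · rw [fourierCoeffOn_eq_integral]
    simp [intervalIntegral.integral_eq_sub_of_hasDerivAt hf hf', hfab]
  · have h := fourierCoeffOn_of_hasDerivAt hab hn hf hf'
    rw [hfab, sub_self, mul_zero, zero_sub] at h
    have hT : ((b - a : ℝ) : ℂ) ≠ 0 := ofReal_ne_zero.2 (sub_pos.2 hab).ne'
    rw [h]
    push_cast at hT ⊢
    field_simp [hn, pi_ne_zero, I_ne_zero]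

theorem wirtinger_of_fourierCoeffOn_eq_zero {a b : ℝ} (hab : a < b) {f f' : ℝ → ℂ}
    (hf : ∀ x, HasDerivAt f (f' x) x) (hf' : Continuous f') (hfab : f b = f a) {k : ℕ}
    (hk : ∀ n : ℤ, n.natAbs < k → fourierCoeffOn hab f n = 0) :
    (2 * π * k / (b - a)) ^ 2 * ∫ x in a..b, ‖f x‖ ^ 2 ≤ ∫ x in a..b, ‖f' x‖ ^ 2 := by
  have hT : 0 < b - a := sub_pos.2 hab
  have hfc : Continuous f := continuous_iff_continuousAt.2 fun x => (hf x).continuousAt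
  have hcoeff : ∀ n : ℤ, ‖fourierCoeffOn hab f' n‖ ^ 2
      = (2 * π * n / (b - a)) ^ 2 * ‖fourierCoeffOn hab f n‖ ^ 2 := by
    intro n
    rw [fourierCoeffOn_deriv_of_eq hab (fun x _ => hf x) (hf'.intervalIntegrable a b) hfab,
      norm_mul, mul_pow]
    congr 1
    rw [show 2 * π * I * n / (b - a) = ((2 * π * n / (b - a) : ℝ) : ℂ) * I by
        push_cast; ring,
      norm_mul, norm_I, mul_one, norm_real, Real.norm_eq_abs, sq_abs]
  have hterm : ∀ n : ℤ, (2 * π * k / (b - a)) ^ 2 * ‖fourierCoeffOn hab f n‖ ^ 2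
      ≤ ‖fourierCoeffOn hab f' n‖ ^ 2 := by
    intro n
    rw [hcoeff]
    rcases lt_or_ge n.natAbs k with hn | hn
    · simp [hk n hn]
    · have hkn : (k : ℝ) ≤ |(n : ℝ)| := by
        rw [← Int.cast_abs, Int.abs_eq_natAbs]; exact_mod_cast hn
      have : 2 * π * k / (b - a) ≤ |2 * π * n / (b - a)| := by
        rw [abs_div, abs_mul, abs_of_pos two_pi_pos, abs_of_pos hT]; gcongr
      gcongr ?_ * _
      rw [← sq_abs (2 * π * n / (b - a))]
      gcongr
  have hsum := hasSum_le hterm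
    ((hasSum_sq_fourierCoeffOn hab (hfc.memLp_restrict_Ioc 2 a b)).mul_left _)
    (hasSum_sq_fourierCoeffOn hab (hf'.memLp_restrict_Ioc 2 a b))
  rw [smul_eq_mul, smul_eq_mul, mul_left_comm] at hsum
  exact le_of_mul_le_mul_left hsum (inv_pos.2 hT)

theorem fourierCoeffOn_ofReal_eq_zero {f : ℝ → ℝ} (hf : Continuous f) {n : ℤ}
    (hcos : ∫ x in 0..2 * π, f x * Real.cos (n * x) = 0)
    (hsin : ∫ x in 0..2 * π, f x * Real.sin (n * x) = 0) :
    fourierCoeffOn two_pi_pos (fun x => (f x : ℂ)) n = 0 := by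
  have hintegrand : ∀ x : ℝ, fourier (-n) (x : AddCircle (2 * π - 0)) • (f x : ℂ)
      = ((f x * Real.cos (n * x) : ℝ) : ℂ) - I * ((f x * Real.sin (n * x) : ℝ) : ℂ) := by
    intro x
    rw [fourier_coe_apply, smul_eq_mul,
      show 2 * π * I * ↑(-n) * ↑x / ↑(2 * π - 0) = ((-(n * x) : ℝ) : ℂ) * I by
        push_cast; field_simp [pi_ne_zero]; ring,
      exp_mul_I, ← ofReal_cos, ← ofReal_sin]
    push_cast [Real.cos_neg, Real.sin_neg]
    ring
  rw [fourierCoeffOn_eq_integral, intervalIntegral.integral_congr fun x _ => hintegrand x,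
    intervalIntegral.integral_sub (by apply Continuous.intervalIntegrable; fun_prop)
      (by apply Continuous.intervalIntegrable; fun_prop),
    intervalIntegral.integral_const_mul, intervalIntegral.integral_ofReal,
    intervalIntegral.integral_ofReal, hcos, hsin]
  simp

theorem nine_mul_integral_sq_le_integral_deriv_sq {g : ℝ → ℝ} (hg : ContDiff ℝ 1 g)
    (hanti : Antiperiodic g π) (hcos : ∫ x in 0..2 * π, g x * Real.cos x = 0)
    (hsin : ∫ x in 0..2 * π, g x * Real.sin x = 0) :
    9 * ∫ x in 0..2 * π, g x ^ 2 ≤ ∫ x in 0..2 * π, deriv g x ^ 2 := by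
  set u : ℝ → ℂ := fun x => (g x : ℂ)
  have hu : ∀ x, HasDerivAt u ((deriv g x : ℝ) : ℂ) x :=
    fun x => (hg.differentiable one_ne_zero x).hasDerivAt.ofReal_comp
  have hu_anti : Antiperiodic u ((2 * π - 0) / 2) := by
    rw [sub_zero, mul_div_cancel_left₀ _ two_ne_zero]
    intro x
    simp [u, hanti x]
  have hcoeff : ∀ n : ℤ, n.natAbs < 3 → fourierCoeffOn two_pi_pos u n = 0 := by
    intro n hn
    have hu_cont : Continuous u := continuous_ofReal.comp hg.continuous
    obtain rfl | rfl | rfl | rfl | rfl : n = -2 ∨ n = -1 ∨ n = 0 ∨ n = 1 ∨ n = 2 := by omega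
    · exact fourierCoeffOn_eq_zero_of_antiperiodic _ hu_anti hu_cont (by decide)
    · apply fourierCoeffOn_ofReal_eq_zero hg.continuous
      · simpa [Real.cos_neg] using hcos
      · simpa [Real.sin_neg, intervalIntegral.integral_neg] using hsin
    · exact fourierCoeffOn_eq_zero_of_antiperiodic _ hu_anti hu_cont (by decide)
    · apply fourierCoeffOn_ofReal_eq_zero hg.continuous
      · simpa using hcos
      · simpa using hsin
    · exact fourierCoeffOn_eq_zero_of_antiperiodic _ hu_anti hu_cont (by decide)
  have h := wirtinger_of_fourierCoeffOn_eq_zero two_pi_pos hu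
    (continuous_ofReal.comp (hg.continuous_deriv le_rfl))
    (by simpa [u] using hanti.periodic_two_mul 0) hcoeff
  rw [show (2 * π * ((3 : ℕ) : ℝ) / (2 * π - 0)) ^ 2 = 9 by field_simp; ring] at h
  simpa [u] using h

theorem pedal_area_diff_ge_L2_distance_constant_width_general
    (p : ℝ → ℝ)
    (hC2 : ContDiff ℝ 2 p)
    (hcos : ∫ φ in (0:ℝ)..(2 * π), p φ * Real.cos φ = 0)
    (hsin : ∫ φ in (0:ℝ)..(2 * π), p φ * Real.sin φ = 0)
    (w : ℝ) (hwidth : ∀ φ, p φ + p (φ + π) = w)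
    (a₀ F A δ₂sq : ℝ)
    (ha₀ : a₀ = (1 / (2 * π)) * ∫ φ in (0:ℝ)..(2 * π), p φ)
    (hF : F = (1 / 2) * ∫ φ in (0:ℝ)..(2 * π), (p φ ^ 2 - (deriv p φ) ^ 2))
    (hA : A = (1 / 2) * ∫ φ in (0:ℝ)..(2 * π), p φ ^ 2)
    (hδ : δ₂sq = ∫ φ in (0:ℝ)..(2 * π), (p φ - a₀) ^ 2) :
    (32 / 9) * π * (A - F) ≥ 16 * π * δ₂sq ∧
      (∫ φ in (0:ℝ)..(2 * π), (deriv p φ) ^ 2) ≥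
        9 * ∫ φ in (0:ℝ)..(2 * π), (p φ - a₀) ^ 2 := by
  have hp : Continuous p := hC2.continuous
  have hanti : Antiperiodic (fun φ => p φ - w / 2) π := fun φ => by linarith [hwidth φ]
  have hmean : a₀ = w / 2 := by
    have h := hanti.intervalIntegral_add_two_mul_eq_zero (hp.sub continuous_const) 0
    rw [zero_add, intervalIntegral.integral_sub (hp.intervalIntegrable _ _)
      intervalIntegrable_const, intervalIntegral.integral_const, sub_eq_zero] at h
    rw [ha₀, h]
    field_simp
    ring
  subst hmean
  have hwirt := nine_mul_integral_sq_le_integral_deriv_sq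
    ((hC2.of_le one_le_two).sub contDiff_const) hanti
    ((intervalIntegral_sub_const_mul hp continuous_cos (by simp) _).trans hcos)
    ((intervalIntegral_sub_const_mul hp continuous_sin (by simp) _).trans hsin)
  simp only [deriv_sub_const] at hwirt
  refine ⟨?_, hwirt⟩
  have hAF : A - F = 1 / 2 * ∫ φ in 0..2 * π, deriv p φ ^ 2 := by
    rw [hA, hF, intervalIntegral.integral_sub (f := fun φ => p φ ^ 2)
      (g := fun φ => deriv p φ ^ 2) ((hp.pow 2).intervalIntegrable _ _)
      (((hC2.continuous_deriv one_le_two).pow 2).intervalIntegrable _ _)]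
    ring
  rw [hAF, hδ]
  nlinarith [pi_pos]

/-- Inequality (e17): for constant width sets, `(32/9)π(A − F) ≥ 16π δ₂(K)²`,
equivalently `∫ p'² ≥ 9 ∫ (p − a₀)²`. -/
theorem pedal_area_diff_ge_L2_distance_constant_width
    (p : ℝ → ℝ)
    (hper : Function.Periodic p (2 * π))
    (hC2 : ContDiff ℝ 2 p)
    (hcos : ∫ φ in (0:ℝ)..(2 * π), p φ * Real.cos φ = 0)
    (hsin : ∫ φ in (0:ℝ)..(2 * π), p φ * Real.sin φ = 0)
    (w : ℝ) (hwidth : ∀ φ, p φ + p (φ + π) = w)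
    (a₀ F A δ₂sq : ℝ)
    (ha₀ : a₀ = (1 / (2 * π)) * ∫ φ in (0:ℝ)..(2 * π), p φ)
    (hF : F = (1 / 2) * ∫ φ in (0:ℝ)..(2 * π), (p φ ^ 2 - (deriv p φ) ^ 2))
    (hA : A = (1 / 2) * ∫ φ in (0:ℝ)..(2 * π), p φ ^ 2)
    (hδ : δ₂sq = ∫ φ in (0:ℝ)..(2 * π), (p φ - a₀) ^ 2) :
    (32 / 9) * π * (A - F) ≥ 16 * π * δ₂sq ∧
      (∫ φ in (0:ℝ)..(2 * π), (deriv p φ) ^ 2) ≥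
        9 * ∫ φ in (0:ℝ)..(2 * π), (p φ - a₀) ^ 2 :=
  pedal_area_diff_ge_L2_distance_constant_width_general p hC2 hcos hsin w hwidth a₀ F A δ₂sq ha₀ hF
    hA hδ
end

section
/- Let p(φ) = a₃cos(3φ) + b₃sin(3φ) with a₃² + b₃² ≠ 0 be the generalized support function of a closed curve C, i.e. C is parametrized by φ ↦ (p(φ)cos φ − p'(φ)sin φ, p(φ)sin φ + p'(φ)cos φ). Then there exist a ≠ 0 and φ₀ such that p(φ) = a cos(3(φ − φ₀)) for all φ, and consequently C is a hypocycloid of three cusps: the image of C equals the image of the curve t ↦ (−2a cos t − a cos 2t, −2a sin t + a sin 2t) rotated by φ₀ about the origin. -/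
open Real

/-!
Writing `(a₃, b₃)` in polar coordinates as `a (cos 3φ₀, sin 3φ₀)` turns `p` into
`a cos (3 (φ - φ₀))`. Shifting the argument of a support function rotates its curve by the
shift, and the curve of `a cos 3s` is the standard hypocycloid traversed as `t = π - 2s`.
-/

noncomputable section

def supportCurve (p : ℝ → ℝ) (φ : ℝ) : ℝ × ℝ :=
  (p φ * cos φ - deriv p φ * sin φ, p φ * sin φ + deriv p φ * cos φ)

def hypocycloid (a t : ℝ) : ℝ × ℝ :=
  (-2 * a * cos t - a * cos (2 * t), -2 * a * sin t + a * sin (2 * t))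

def rotate (θ : ℝ) (v : ℝ × ℝ) : ℝ × ℝ :=
  (v.1 * cos θ - v.2 * sin θ, v.1 * sin θ + v.2 * cos θ)

end

lemma exists_cos_mul_sub_eq {a₃ b₃ : ℝ} (h : a₃ ^ 2 + b₃ ^ 2 ≠ 0) {n : ℝ} (hn : n ≠ 0) :
    ∃ a : ℝ, a ≠ 0 ∧ ∃ φ₀ : ℝ,
      ∀ φ, a₃ * cos (n * φ) + b₃ * sin (n * φ) = a * cos (n * (φ - φ₀)) := by
  set z : ℂ := ⟨a₃, b₃⟩
  have hz : z ≠ 0 := fun hz ↦ h <| by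
    simp [show a₃ = 0 from congrArg Complex.re hz, show b₃ = 0 from congrArg Complex.im hz]
  refine ⟨‖z‖, norm_ne_zero_iff.mpr hz, z.arg / n, fun φ ↦ ?_⟩
  have hre : ‖z‖ * cos z.arg = a₃ := Complex.norm_mul_cos_arg z
  have him : ‖z‖ * sin z.arg = b₃ := Complex.norm_mul_sin_arg z
  rw [mul_sub, mul_div_cancel₀ _ hn, cos_sub, ← hre, ← him]
  ring

lemma supportCurve_comp_sub (q : ℝ → ℝ) (φ₀ s : ℝ) :
    supportCurve (fun φ ↦ q (φ - φ₀)) (s + φ₀) = rotate φ₀ (supportCurve q s) := by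
  simp only [supportCurve, rotate, deriv_comp_sub_const, add_sub_cancel_right, cos_add, sin_add,
    Prod.mk.injEq]
  constructor <;> ring

lemma range_supportCurve_comp_sub (q : ℝ → ℝ) (φ₀ : ℝ) :
    Set.range (supportCurve fun φ ↦ q (φ - φ₀)) = rotate φ₀ '' Set.range (supportCurve q) := by
  rw [← Set.range_comp, ← (Equiv.addRight φ₀).surjective.range_comp]
  exact congrArg Set.range (funext (supportCurve_comp_sub q φ₀))

lemma deriv_const_mul_cos_three_mul (a s : ℝ) :
    deriv (fun s ↦ a * cos (3 * s)) s = -(3 * a * sin (3 * s)) := by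
  rw [(((hasDerivAt_id' s).const_mul 3).cos.const_mul a).deriv]
  ring

lemma supportCurve_const_mul_cos_three_mul (a s : ℝ) :
    supportCurve (fun s ↦ a * cos (3 * s)) s = hypocycloid a (π - 2 * s) := by
  have h2 : 2 * s = 3 * s - s := by ring
  have h4 : 2 * (π - 2 * s) = 2 * π - (3 * s + s) := by ring
  simp only [supportCurve, hypocycloid, deriv_const_mul_cos_three_mul, cos_pi_sub, sin_pi_sub]
  rw [h4, cos_two_pi_sub, sin_two_pi_sub, h2, cos_add, sin_add, cos_sub, sin_sub, Prod.mk.injEq]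
  constructor <;> ring

lemma range_supportCurve_const_mul_cos_three_mul (a : ℝ) :
    Set.range (supportCurve fun s ↦ a * cos (3 * s)) = Set.range (hypocycloid a) := by
  rw [funext (supportCurve_const_mul_cos_three_mul a)]
  have hsurj : (fun s : ℝ ↦ π - 2 * s).Surjective := fun t ↦ ⟨(π - t) / 2, by ring⟩
  exact hsurj.range_comp (hypocycloid a)

/-- Proposition 4.4: a closed curve with generalized support function
`p(φ) = a₃ cos 3φ + b₃ sin 3φ`, `a₃² + b₃² ≠ 0`, satisfies
`p(φ) = a cos(3(φ − φ₀))` for some `a ≠ 0, φ₀`, and is a hypocycloid of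
three cusps (a rotated copy of the standard one). -/
theorem curve_is_hypocycloid_of_three_cusps
    (a₃ b₃ : ℝ) (p : ℝ → ℝ)
    (hp : ∀ φ, p φ = a₃ * Real.cos (3 * φ) + b₃ * Real.sin (3 * φ))
    (hne : a₃ ^ 2 + b₃ ^ 2 ≠ 0) :
    ∃ a : ℝ, a ≠ 0 ∧ ∃ φ₀ : ℝ,
      (∀ φ : ℝ, p φ = a * Real.cos (3 * (φ - φ₀))) ∧
      (Set.range fun φ : ℝ =>
        ((p φ * Real.cos φ - deriv p φ * Real.sin φ,
          p φ * Real.sin φ + deriv p φ * Real.cos φ) : ℝ × ℝ)) =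
      (Set.range fun t : ℝ =>
        (((-2 * a * Real.cos t - a * Real.cos (2 * t)) * Real.cos φ₀ -
            (-2 * a * Real.sin t + a * Real.sin (2 * t)) * Real.sin φ₀,
          (-2 * a * Real.cos t - a * Real.cos (2 * t)) * Real.sin φ₀ +
            (-2 * a * Real.sin t + a * Real.sin (2 * t)) * Real.cos φ₀) :
          ℝ × ℝ)) := by
  obtain ⟨a, ha, φ₀, hshift⟩ := exists_cos_mul_sub_eq hne three_ne_zero
  have hp' : ∀ φ, p φ = a * cos (3 * (φ - φ₀)) := fun φ ↦ (hp φ).trans (hshift φ)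
  refine ⟨a, ha, φ₀, hp', ?_⟩
  change Set.range (supportCurve p) = Set.range (rotate φ₀ ∘ hypocycloid a)
  rw [funext hp', range_supportCurve_comp_sub (fun s ↦ a * cos (3 * s)),
    range_supportCurve_const_mul_cos_three_mul, Set.range_comp]
end
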